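/- arXiv:2012.10622 — 6 statements merged into one kernel-verified Lean document; each statement's English description precedes it below -/
import Mathlib

section
/- Let (A, q_A) and (B, q_B) be non-degenerate finite quadratic forms, D_A ⊆ A, D_B ⊆ B subgroups, and φ : D_A → D_B an isomorphism satisfying q_B(φ(x)) = -q_A(x) for all x ∈ D_A. Let Γ ⊆ A ⊕ B be the graph of φ. Then the natural projection Γ^⊥ → B (orthogonal complement with respect to the bilinear form associated to q_A ⊕ q_B) is surjective. -/
/-- ℚ/2ℤ, the value group of a finite quadratic form. -/
abbrev Q2 : Type := ℚ ⧸ AddSubgroup.zmultiples (2 : ℚ)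

/-- The polar (bilinear) form associated to a quadratic form `q`; with values in ℚ/2ℤ it is
twice the usual ℚ/ℤ-valued bilinear form `b`, and vanishes exactly when `b` does. -/
def qpolar {A : Type} [AddCommGroup A] (q : A → Q2) (x y : A) : Q2 :=
  q (x + y) - q x - q y

/-- `q` is a non-degenerate finite quadratic form on the finite abelian group `A`. -/
structure IsNondegFQF {A : Type} [AddCommGroup A] [Fintype A] (q : A → Q2) : Prop where
  hom : ∀ (n : ℤ) (a : A), q (n • a) = (n ^ 2) • q a
  bilin : ∀ a b c : A, qpolar q (a + b) c = qpolar q a c + qpolar q b c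
  nondeg : ∀ a : A, (∀ b : A, qpolar q a b = 0) → a = 0

/-!
Fix `b : B`. The map `x ↦ -b_B(b, φ x)` is a `ℚ/2ℤ`-valued character of `D_A`; as `ℚ/2ℤ` is
divisible it extends to a character of `A`. Non-degeneracy makes `a ↦ b_A(a, ·)` an injection of
`A` into its character group, which has the same order because `ℚ/2ℤ` contains all roots of unity.
So the extended character is `b_A(a, ·)` for some `a`, and then `(a, b)` is orthogonal to `Γ`.
-/

lemma Q2.addOrderOf_two_div {n : ℕ} (hn : 0 < n) : addOrderOf ((2 / n : ℚ) : Q2) = n :=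
  haveI : Fact ((0 : ℚ) < 2) := ⟨two_pos⟩
  AddCircle.addOrderOf_period_div hn

lemma Q2.mem_zmultiples_of_nsmul_eq_zero {n : ℕ} (hn : 0 < n) {u : Q2} (hu : n • u = 0) :
    u ∈ AddSubgroup.zmultiples ((2 / n : ℚ) : Q2) := by
  have : Fact ((0 : ℚ) < 2) := ⟨two_pos⟩
  obtain ⟨m, -, rfl⟩ := (AddCircle.nsmul_eq_zero_iff hn).1 hu
  rw [AddCircle.natCast_div_mul_eq_nsmul]
  exact nsmul_mem (AddSubgroup.mem_zmultiples _) m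

instance Q2.hasEnoughRootsOfUnity (n : ℕ) [NeZero n] :
    HasEnoughRootsOfUnity (Multiplicative Q2) n := by
  have hn : 0 < n := Nat.pos_of_neZero n
  set ζ : Multiplicative Q2 := .ofAdd ((2 / n : ℚ) : Q2)
  have hζ : IsPrimitiveRoot ζ n := by
    rw [IsPrimitiveRoot.iff_orderOf, orderOf_ofAdd_eq_addOrderOf, Q2.addOrderOf_two_div hn]
  refine ⟨⟨ζ, hζ⟩, ⟨⟨hζ.toRootsOfUnity, fun x => ?_⟩⟩⟩
  have hx : n • (x : (Multiplicative Q2)ˣ).val.toAdd = 0 := by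
    rw [← toAdd_pow, ← Units.val_pow_eq_pow_val, (mem_rootsOfUnity n _).1 x.2]
    rfl
  obtain ⟨k, hk⟩ := AddSubgroup.mem_zmultiples_iff.1 (Q2.mem_zmultiples_of_nsmul_eq_zero hn hx)
  refine Subgroup.mem_zpowers_iff.2 ⟨k, Subtype.ext (Units.ext ?_)⟩
  rw [Subgroup.coe_zpow, Units.val_zpow_eq_zpow_val, IsPrimitiveRoot.val_toRootsOfUnity_coe,
    ← ofAdd_zsmul, hk, ofAdd_toAdd]

lemma Q2.card_addMonoidHom (A : Type) [AddCommGroup A] [Finite A] :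
    Nat.card (A →+ Q2) = Nat.card A := by
  have : NeZero (Monoid.exponent (Multiplicative A)) := ⟨Monoid.exponent_ne_zero_of_finite⟩
  calc Nat.card (A →+ Q2) = Nat.card (Multiplicative A →* (Multiplicative Q2)ˣ) :=
        Nat.card_congr
          (AddMonoidHom.toMultiplicative.trans (MulEquiv.monoidHomCongrRight toUnits).toEquiv)
    _ = Nat.card A := CommGroup.card_monoidHom_of_hasEnoughRootsOfUnity _ _

lemma Q2.exists_addMonoidHom_extension {A : Type} [AddCommGroup A] (D : AddSubgroup A)
    (L : D →+ Q2) : ∃ L' : A →+ Q2, ∀ x : D, L' x = L x := by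
  have : Fact ((0 : ℚ) < 2) := ⟨two_pos⟩
  have : DivisibleBy Q2 ℤ := inferInstanceAs (DivisibleBy (AddCircle (2 : ℚ)) ℤ)
  obtain ⟨L', hL'⟩ := (Module.Baer.of_divisible Q2).injective.out
    D.subtype.toIntLinearMap Subtype.val_injective L.toIntLinearMap
  exact ⟨L'.toAddMonoidHom, hL'⟩

lemma qpolar_comm {A : Type} [AddCommGroup A] (q : A → Q2) (x y : A) :
    qpolar q x y = qpolar q y x := by
  rw [qpolar, qpolar, add_comm x y, sub_right_comm]

lemma qpolar_prod {A B : Type} [AddCommGroup A] [AddCommGroup B] (qA : A → Q2) (qB : B → Q2)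
    (a x : A) (b y : B) :
    qpolar (fun p : A × B => qA p.1 + qB p.2) (a, b) (x, y) = qpolar qA a x + qpolar qB b y := by
  simp only [qpolar, Prod.mk_add_mk]
  abel

section Polar

variable {A : Type} [AddCommGroup A] {q : A → Q2}

lemma qpolar_add_right (hq : ∀ a b c : A, qpolar q (a + b) c = qpolar q a c + qpolar q b c)
    (a b c : A) : qpolar q a (b + c) = qpolar q a b + qpolar q a c := by
  rw [qpolar_comm, hq, qpolar_comm q b, qpolar_comm q c]

def polarHom (hq : ∀ a b c : A, qpolar q (a + b) c = qpolar q a c + qpolar q b c) :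
    A →+ A →+ Q2 :=
  AddMonoidHom.mk' (fun a => AddMonoidHom.mk' (qpolar q a) (qpolar_add_right hq a))
    fun a b => AddMonoidHom.ext (hq a b)

@[simp]
lemma polarHom_apply (hq : ∀ a b c : A, qpolar q (a + b) c = qpolar q a c + qpolar q b c)
    (a b : A) : polarHom hq a b = qpolar q a b := rfl

end Polar

namespace IsNondegFQF

variable {A : Type} [AddCommGroup A] [Fintype A] {q : A → Q2}

lemma polarHom_bijective (h : IsNondegFQF q) : Function.Bijective (polarHom h.bilin) := by
  have : Finite (A →+ Q2) := Nat.finite_of_card_ne_zero (by simp [Q2.card_addMonoidHom])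
  refine Function.Injective.bijective_of_nat_card_le ?_ (Q2.card_addMonoidHom A).le
  refine (injective_iff_map_eq_zero _).2 fun a ha => h.nondeg a fun b => ?_
  simpa using DFunLike.congr_fun ha b

lemma exists_qpolar_eq (h : IsNondegFQF q) (D : AddSubgroup A) (L : D →+ Q2) :
    ∃ a : A, ∀ x : D, qpolar q a x = L x := by
  obtain ⟨L', hL'⟩ := Q2.exists_addMonoidHom_extension D L
  obtain ⟨a, rfl⟩ := h.polarHom_bijective.2 L'
  exact ⟨a, hL'⟩

end IsNondegFQF

theorem statement0_general {A B : Type} [AddCommGroup A] [Fintype A] [AddCommGroup B] [Fintype B]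
    (qA : A → Q2) (qB : B → Q2) (hA : IsNondegFQF qA) (hB : IsNondegFQF qB)
    (DA : AddSubgroup A) (DB : AddSubgroup B) (φ : DA ≃+ DB) :
    ∀ b : B, ∃ a : A,
      ∀ x : DA, qpolar (fun p : A × B => qA p.1 + qB p.2) (a, b) ((x : A), (φ x : B)) = 0 := by
  intro b
  obtain ⟨a, ha⟩ := hA.exists_qpolar_eq DA
    (-(polarHom hB.bilin b).comp (DB.subtype.comp φ.toAddMonoidHom))
  refine ⟨a, fun x => ?_⟩
  rw [qpolar_prod, ha]
  simp

/-- if `φ : D_A ≃ D_B` is an anti-isometry between subgroups of the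
non-degenerate finite quadratic forms `(A, q_A)` and `(B, q_B)`, and `Γ ⊆ A ⊕ B` is its graph,
then the projection `Γ^⊥ → B` is surjective: for every `b : B` there is `a : A`
with `(a, b)` orthogonal (for the bilinear form of `q_A ⊕ q_B`) to every `(x, φ x)`. -/
theorem statement0 {A B : Type} [AddCommGroup A] [Fintype A] [AddCommGroup B] [Fintype B]
    (qA : A → Q2) (qB : B → Q2) (hA : IsNondegFQF qA) (hB : IsNondegFQF qB)
    (DA : AddSubgroup A) (DB : AddSubgroup B) (φ : DA ≃+ DB)
    (hφ : ∀ x : DA, qB ((φ x : B)) = - qA ((x : A))) :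
    ∀ b : B, ∃ a : A,
      ∀ x : DA, qpolar (fun p : A × B => qA p.1 + qB p.2) (a, b) ((x : A), (φ x : B)) = 0 :=
  statement0_general qA qB hA hB DA DB φ
end

section
/- Let R̃ be an irreducible ADE root lattice and g ∈ O(R̃) an isometry that acts trivially on R̃/2R̃ (equivalently, g(v) ≡ v mod 2R̃ for all v ∈ R̃). If the positive roots of R̃ inject into R̃/2R̃, then g = 1 or g = -1. -/
/-!
An isometry acting trivially mod `2L` sends each root `r` to a root congruent to `r` mod `2L`,
hence to `±r` by injectivity of the roots mod `2L`. Roots fixed by `g` are orthogonal to roots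
negated by `g`, since `B r s = B (g r) (g s) = -B r s`, so the two sets of roots span
orthogonal sublattices whose sum is `L`. By irreducibility one of them is zero, so `g` acts on all
roots by the same sign, and hence on their span `L`.
-/

section OrthogonalSplitting

variable {K V : Type*} [CommRing K] [AddCommGroup V] [Module K V]

def IsOrthogonallyIndecomposable (B : V →ₗ[K] V →ₗ[K] K) (L : Submodule ℤ V) : Prop :=
  ¬ ∃ L₁ L₂ : Submodule ℤ V, L₁ ≠ ⊥ ∧ L₂ ≠ ⊥ ∧ L₁ ≤ L ∧ L₂ ≤ L ∧
    (∀ x ∈ L₁, ∀ y ∈ L₂, B x y = 0) ∧ L₁ ⊔ L₂ = L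

theorem LinearMap.apply_eq_zero_of_eq_of_eq_neg [IsAddTorsionFree K] (B : V →ₗ[K] V →ₗ[K] K)
    {g : V → V} (hgB : ∀ x y, B (g x) (g y) = B x y) {x y : V} (hx : g x = x) (hy : g y = -y) :
    B x y = 0 :=
  self_eq_neg.mp <| calc
    B x y = B (g x) (g y) := (hgB x y).symm
    _ = -B x y := by rw [hx, hy, map_neg]

theorem LinearMap.apply_eq_zero_of_mem_span (B : V →ₗ[K] V →ₗ[K] K) {s t : Set V}
    (horth : ∀ x ∈ s, ∀ y ∈ t, B x y = 0) {x y : V} (hx : x ∈ Submodule.span ℤ s)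
    (hy : y ∈ Submodule.span ℤ t) : B x y = 0 := by
  induction hx using Submodule.span_induction with
  | mem x hx =>
    induction hy using Submodule.span_induction with
    | mem y hy => exact horth x hx y hy
    | zero => simp
    | add a b _ _ ha hb => rw [map_add, ha, hb, add_zero]
    | smul n a _ ha => rw [map_zsmul, ha, smul_zero]
  | zero => simp
  | add a b _ _ ha hb => rw [map_add, LinearMap.add_apply, ha, hb, add_zero]
  | smul n a _ ha => rw [map_zsmul, LinearMap.smul_apply, ha, smul_zero]

theorem IsOrthogonallyIndecomposable.span_eq_bot_or_span_eq_bot {B : V →ₗ[K] V →ₗ[K] K}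
    {L : Submodule ℤ V} (hL : IsOrthogonallyIndecomposable B L) {s t : Set V}
    (hspan : Submodule.span ℤ (s ∪ t) = L) (horth : ∀ x ∈ s, ∀ y ∈ t, B x y = 0) :
    Submodule.span ℤ s = ⊥ ∨ Submodule.span ℤ t = ⊥ := by
  rw [Submodule.span_union] at hspan
  by_contra! hne
  exact hL ⟨_, _, hne.1, hne.2, hspan ▸ le_sup_left, hspan ▸ le_sup_right,
    fun x hx y hy => B.apply_eq_zero_of_mem_span horth hx hy, hspan⟩

end OrthogonalSplitting

theorem LinearMap.apply_eq_smul_of_mem_span {K V : Type*} [CommRing K] [AddCommGroup V]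
    [Module K V] (g : V →ₗ[K] V) (c : K) {s : Set V} (hs : ∀ x ∈ s, g x = c • x) {v : V}
    (hv : v ∈ Submodule.span ℤ s) : g v = c • v := by
  induction hv using Submodule.span_induction with
  | mem x hx => exact hs x hx
  | zero => simp
  | add a b _ _ ha hb => rw [map_add, ha, hb, smul_add]
  | smul n a _ ha => rw [map_zsmul, ha, smul_comm]

theorem statement6_general {V : Type} [AddCommGroup V] [Module ℚ V]
    (B : V →ₗ[ℚ] V →ₗ[ℚ] ℚ)
    (L : Submodule ℤ V)
    (hroots : Submodule.span ℤ {v : V | v ∈ L ∧ B v v = -2} = L)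
    (hirr : ¬ ∃ L₁ L₂ : Submodule ℤ V, L₁ ≠ ⊥ ∧ L₂ ≠ ⊥ ∧ L₁ ≤ L ∧ L₂ ≤ L ∧
      (∀ x ∈ L₁, ∀ y ∈ L₂, B x y = 0) ∧ L₁ ⊔ L₂ = L)
    (g : V ≃ₗ[ℚ] V)
    (hgB : ∀ x y : V, B (g x) (g y) = B x y)
    (hgL : ∀ x : V, x ∈ L ↔ g x ∈ L)
    (hgtriv : ∀ v ∈ L, ∃ w ∈ L, g v - v = (2 : ℤ) • w)
    (hinj : ∀ r r' : V, (r ∈ L ∧ B r r = -2) → (r' ∈ L ∧ B r' r' = -2) →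
      (∃ w ∈ L, r - r' = (2 : ℤ) • w) → (r = r' ∨ r = -r')) :
    (∀ v ∈ L, g v = v) ∨ (∀ v ∈ L, g v = -v) := by
  set R := {v : V | v ∈ L ∧ B v v = -2}
  have hsign (r) (hr : r ∈ R) : g r = r ∨ g r = -r :=
    hinj (g r) r ⟨(hgL r).mp hr.1, (hgB r r).trans hr.2⟩ hr (hgtriv r hr.1)
  have hne (r) (hr : r ∈ R) : r ≠ 0 := by
    rintro rfl
    simpa using hr.2
  have hsplit : {r ∈ R | g r = r} ∪ {r ∈ R | g r = -r} = R := by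
    ext r
    simp only [Set.mem_union, Set.mem_ofPred_eq, ← and_or_left]
    exact ⟨And.left, fun hr => ⟨hr, hsign r hr⟩⟩
  have horth : ∀ x ∈ {r ∈ R | g r = r}, ∀ y ∈ {r ∈ R | g r = -r}, B x y = 0 :=
    fun x hx y hy => B.apply_eq_zero_of_eq_of_eq_neg hgB hx.2 hy.2
  rcases IsOrthogonallyIndecomposable.span_eq_bot_or_span_eq_bot hirr
    ((congrArg _ hsplit).trans hroots) horth with hfix | hneg
  · right
    intro v hv
    refine (g.toLinearMap.apply_eq_smul_of_mem_span (-1) (fun r hr => ?_)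
      (hroots ▸ hv)).trans (neg_one_smul ℚ v)
    rw [neg_one_smul]
    exact (hsign r hr).resolve_left fun h => hne r hr (Submodule.span_eq_bot.mp hfix r ⟨hr, h⟩)
  · left
    intro v hv
    refine (g.toLinearMap.apply_eq_smul_of_mem_span 1 (fun r hr => ?_)
      (hroots ▸ hv)).trans (one_smul ℚ v)
    rw [one_smul]
    exact (hsign r hr).resolve_right fun h => hne r hr (Submodule.span_eq_bot.mp hneg r ⟨hr, h⟩)

/-- let `L` be an irreducible ADE root lattice (even, negative definite,
generated by its roots, not an orthogonal direct sum of two nonzero sublattices) and let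
`g` be an isometry of `L` acting trivially on `L/2L`.  If (any two) roots congruent mod `2L`
are equal or opposite (i.e. the positive roots inject into `L/2L`), then `g = 1` or
`g = -1` on `L`. -/
theorem statement6 {V : Type} [AddCommGroup V] [Module ℚ V]
    (B : V →ₗ[ℚ] V →ₗ[ℚ] ℚ) (hsymm : ∀ x y : V, B x y = B y x)
    (L : Submodule ℤ V)
    (heven : ∀ v ∈ L, ∃ n : ℤ, B v v = 2 * n)
    (hnegdef : ∀ v ∈ L, v ≠ 0 → B v v < 0)
    (hroots : Submodule.span ℤ {v : V | v ∈ L ∧ B v v = -2} = L)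
    (hirr : ¬ ∃ L₁ L₂ : Submodule ℤ V, L₁ ≠ ⊥ ∧ L₂ ≠ ⊥ ∧ L₁ ≤ L ∧ L₂ ≤ L ∧
      (∀ x ∈ L₁, ∀ y ∈ L₂, B x y = 0) ∧ L₁ ⊔ L₂ = L)
    (g : V ≃ₗ[ℚ] V)
    (hgB : ∀ x y : V, B (g x) (g y) = B x y)
    (hgL : ∀ x : V, x ∈ L ↔ g x ∈ L)
    (hgtriv : ∀ v ∈ L, ∃ w ∈ L, g v - v = (2 : ℤ) • w)
    (hinj : ∀ r r' : V, (r ∈ L ∧ B r r = -2) → (r' ∈ L ∧ B r' r' = -2) →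
      (∃ w ∈ L, r - r' = (2 : ℤ) • w) → (r = r' ∨ r = -r')) :
    (∀ v ∈ L, g v = v) ∨ (∀ v ∈ L, g v = -v) :=
  statement6_general B L hroots hirr g hgB hgL hgtriv hinj
end

section
/- Let R̃ = ⊕_{j∈J} R̃_j be an ADE root lattice with irreducible components R̃_j, and consider the natural homomorphism ψ : O(R̃) → O((1/2)R̃^∨/R̃), where (1/2)R̃^∨/R̃ is the discriminant group of the rescaled lattice R̃(2). Then the kernel of ψ consists precisely of the isometries ⊕_j g_j with g_j = ±1 on R̃_j when R̃_j is unimodular, and g_j = 1 on R̃_j otherwise. -/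
section ADE

variable {V : Type} [AddCommGroup V] [Module ℚ V]

/-- A root of a lattice `L`: a vector of `L` of square `-2`. -/
def IsRootOf (B : V →ₗ[ℚ] V →ₗ[ℚ] ℚ) (L : Submodule ℤ V) (r : V) : Prop :=
  r ∈ L ∧ B r r = -2

/-- An ADE-lattice: an integral even negative definite lattice generated by its roots. -/
def IsADELattice (B : V →ₗ[ℚ] V →ₗ[ℚ] ℚ) (L : Submodule ℤ V) : Prop :=
  (∀ v ∈ L, ∀ w ∈ L, ∃ m : ℤ, B v w = m) ∧
  (∀ v ∈ L, ∃ n : ℤ, B v v = 2 * n) ∧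
  (∀ v ∈ L, v ≠ 0 → B v v < 0) ∧
  Submodule.span ℤ {r : V | IsRootOf B L r} = L

/-- Irreducibility of the lattice. -/
def IsIrreducibleLattice (B : V →ₗ[ℚ] V →ₗ[ℚ] ℚ) (L : Submodule ℤ V) : Prop :=
  L ≠ ⊥ ∧ ¬ ∃ L₁ L₂ : Submodule ℤ V, L₁ ≠ ⊥ ∧ L₂ ≠ ⊥ ∧ L₁ ≤ L ∧ L₂ ≤ L ∧
    (∀ x ∈ L₁, ∀ y ∈ L₂, B x y = 0) ∧ L₁ ⊔ L₂ = L

end ADE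

/-!
Let `g` act trivially on `(1/2)L^∨/L`. For a root `r`, `r/2 ∈ (1/2)L^∨`, so `g r = r + 2w` with
`w ∈ L`; then `(r - g r)² = 4w²` and `(r + g r)² = 4(r + w)²` lie in `8ℤ_{≤0}` and add up to
`2r² + 2(g r)² = -8`, so one of them vanishes and `g r = ±r`. The fixed and the negated roots span
orthogonal sublattices, so `g = ±1` on each irreducible component `L_j`. If `g = -1` on `L_j`,
applying the hypothesis to `x/2` for `x ∈ L_j^∨` gives `x ∈ L ∩ ℚL_j = L_j`, so `L_j` is
unimodular. Conversely, for such `g` the component `x_j ∈ ℚL_j` of `x ∈ (1/2)L^∨` is moved by `0`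
or by `-2x_j ∈ L_j^∨ = L_j`.
-/

open Submodule

theorem exists_sum_eq_of_mem_iSup {R M ι : Type*} [Semiring R] [AddCommMonoid M] [Module R M]
    [Fintype ι] {p : ι → Submodule R M} {x : M} (hx : x ∈ ⨆ i, p i) :
    ∃ f : ι → M, (∀ i, f i ∈ p i) ∧ ∑ i, f i = x := by
  obtain ⟨f, hf⟩ := (mem_iSup_finset_iff_exists_sum (s := Finset.univ) p x).mp (by simpa using hx)
  exact ⟨fun i => f i, fun i => (f i).2, hf⟩

theorem LinearMap.apply_eq_zero_of_mem_span_s12 {R M N P : Type*} [CommSemiring R]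
    [AddCommMonoid M] [AddCommMonoid N] [AddCommMonoid P] [Module R M] [Module R N] [Module R P]
    (f : M →ₗ[R] N →ₗ[R] P) {s : Set M} {t : Set N} (h : ∀ x ∈ s, ∀ y ∈ t, f x y = 0)
    {x : M} {y : N} (hx : x ∈ span R s) (hy : y ∈ span R t) : f x y = 0 := by
  have hmem := apply_mem_map₂ f hx hy
  rwa [map₂_span_span, span_eq_bot.mpr, mem_bot] at hmem
  rintro _ ⟨x, hx, y, hy, rfl⟩
  exact h x hx y hy

section

variable {V : Type} [AddCommGroup V] [Module ℚ V] {B : V →ₗ[ℚ] V →ₗ[ℚ] ℚ} {L : Submodule ℤ V}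

theorem apply_self_nonpos_of_negDef (hneg : ∀ v ∈ L, v ≠ 0 → B v v < 0) {v : V} (hv : v ∈ L) :
    B v v ≤ 0 := by
  rcases eq_or_ne v 0 with rfl | h
  · simp
  · exact (hneg v hv h).le

theorem eq_zero_of_apply_self_eq_zero (hneg : ∀ v ∈ L, v ≠ 0 → B v v < 0) {v : V} (hv : v ∈ L)
    (h : B v v = 0) : v = 0 := by
  by_contra hv0
  exact (hneg v hv hv0).ne h

theorem eq_or_eq_neg_of_eq_add_two_smul (heven : ∀ v ∈ L, ∃ n : ℤ, B v v = 2 * n)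
    (hneg : ∀ v ∈ L, v ≠ 0 → B v v < 0) {r s w : V} (hr : r ∈ L) (hrr : B r r = -2)
    (hss : B s s = -2) (hw : w ∈ L) (hs : s = r + (2 : ℚ) • w) : s = r ∨ s = -r := by
  have hrw : r + w ∈ L := add_mem hr hw
  obtain ⟨a, ha⟩ := heven w hw
  obtain ⟨b, hb⟩ := heven (r + w) hrw
  have hparallelogram : B (r - s) (r - s) + B (r + s) (r + s) = -8 := by
    simp only [map_add, map_sub, LinearMap.add_apply, LinearMap.sub_apply, hrr, hss]
    ring
  have hminus : B (r - s) (r - s) = 8 * a := by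
    rw [show r - s = (-2 : ℚ) • w by rw [hs]; module]
    simp only [map_smul, LinearMap.smul_apply, smul_eq_mul, ha]
    ring
  have hplus : B (r + s) (r + s) = 8 * b := by
    rw [show r + s = (2 : ℚ) • (r + w) by rw [hs]; module]
    simp only [map_smul, LinearMap.smul_apply, smul_eq_mul, hb]
    ring
  have ha0 : (a : ℚ) ≤ 0 := by linarith [apply_self_nonpos_of_negDef hneg hw]
  have hb0 : (b : ℚ) ≤ 0 := by linarith [apply_self_nonpos_of_negDef hneg hrw]
  have hab : (a : ℚ) + b = -1 := by linarith
  obtain rfl | rfl : a = 0 ∨ b = 0 := by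
    have ha0' : a ≤ 0 := by exact_mod_cast ha0
    have hb0' : b ≤ 0 := by exact_mod_cast hb0
    have hab' : a + b = -1 := by exact_mod_cast hab
    omega
  · left
    have hw0 : w = 0 := eq_zero_of_apply_self_eq_zero hneg hw (by simpa using ha)
    rw [hs, hw0, smul_zero, add_zero]
  · right
    have hrw0 : r + w = 0 := eq_zero_of_apply_self_eq_zero hneg hrw (by simpa using hb)
    rw [hs, eq_neg_of_add_eq_zero_right hrw0]
    module

theorem eqOn_or_eqOn_neg_of_irreducible (hirr : IsIrreducibleLattice B L)
    (hroots : span ℤ {r | IsRootOf B L r} = L) (g : V →ₗ[ℚ] V)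
    (hgB : ∀ x y, B (g x) (g y) = B x y) (hg : ∀ r, IsRootOf B L r → g r = r ∨ g r = -r) :
    (∀ v ∈ L, g v = v) ∨ (∀ v ∈ L, g v = -v) := by
  set Sp : Set V := {r | IsRootOf B L r ∧ g r = r}
  set Sm : Set V := {r | IsRootOf B L r ∧ g r = -r}
  have horth : ∀ x ∈ span ℤ Sp, ∀ y ∈ span ℤ Sm, B x y = 0 := by
    refine fun x hx y hy => B.apply_eq_zero_of_mem_span_s12 ?_ (span_le_restrictScalars ℤ ℚ Sp hx)
      (span_le_restrictScalars ℤ ℚ Sm hy)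
    rintro x ⟨-, hgx⟩ y ⟨-, hgy⟩
    have := hgB x y
    rw [hgx, hgy, map_neg] at this
    linarith
  have hsup : span ℤ Sp ⊔ span ℤ Sm = L := by
    rw [← span_union, ← hroots]
    congr 1
    ext r
    constructor
    · rintro (⟨hr, -⟩ | ⟨hr, -⟩) <;> exact hr
    · intro hr
      exact (hg r hr).imp (And.intro hr) (And.intro hr)
  have hle : ∀ S : Set V, S ⊆ {r | IsRootOf B L r} → span ℤ S ≤ L := fun S hS =>
    span_le.mpr fun r hr => (hS hr).1
  have hbot : span ℤ Sp = ⊥ ∨ span ℤ Sm = ⊥ := by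
    by_contra! h
    exact hirr.2 ⟨_, _, h.1, h.2, hle Sp fun r hr => hr.1, hle Sm fun r hr => hr.1, horth, hsup⟩
  rcases hbot with hp | hm
  · right
    rw [hp, bot_sup_eq] at hsup
    intro v hv
    rw [← hsup] at hv
    exact LinearMap.eqOn_span (f := g.restrictScalars ℤ) (g := -LinearMap.id)
      (fun r hr => hr.2) hv
  · left
    rw [hm, sup_bot_eq] at hsup
    intro v hv
    rw [← hsup] at hv
    exact LinearMap.eqOn_span (f := g.restrictScalars ℤ) (g := LinearMap.id)
      (fun r hr => hr.2) hv

end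

section OrthogonalSum

variable {V : Type} [AddCommGroup V] [Module ℚ V] {B : V →ₗ[ℚ] V →ₗ[ℚ] ℚ}
  {J : Type} {Lc : J → Submodule ℤ V}

theorem orthogonal_span_rat (horth : ∀ j k, j ≠ k → ∀ x ∈ Lc j, ∀ y ∈ Lc k, B x y = 0)
    (j k : J) (hjk : j ≠ k) :
    ∀ x ∈ span ℚ (Lc j : Set V), ∀ y ∈ span ℚ (Lc k : Set V), B x y = 0 :=
  fun _ hx _ hy => B.apply_eq_zero_of_mem_span_s12 (horth j k hjk) hx hy

theorem iSup_span_rat_eq_top (hspan : span ℚ ((⨆ j, Lc j : Submodule ℤ V) : Set V) = ⊤) :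
    ⨆ j, span ℚ (Lc j : Set V) = ⊤ := by
  rw [← hspan, iSup_eq_span Lc, span_span_of_tower, span_iUnion]

variable [Fintype J]

theorem sum_apply_eq_of_orthogonal {S : J → Set V}
    (horth : ∀ j k, j ≠ k → ∀ x ∈ S j, ∀ y ∈ S k, B x y = 0) {f : J → V}
    (hf : ∀ j, f j ∈ S j) {k : J} {y : V} (hy : y ∈ S k) : B (∑ j, f j) y = B (f k) y := by
  rw [map_sum, LinearMap.sum_apply]
  exact Finset.sum_eq_single_of_mem k (Finset.mem_univ k)
    fun j _ hjk => horth j k hjk _ (hf j) _ hy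

theorem apply_sum_eq_of_orthogonal {S : J → Set V}
    (horth : ∀ j k, j ≠ k → ∀ x ∈ S j, ∀ y ∈ S k, B x y = 0) {f : J → V}
    (hf : ∀ j, f j ∈ S j) {k : J} {x : V} (hx : x ∈ S k) : B x (∑ j, f j) = B x (f k) := by
  rw [map_sum]
  exact Finset.sum_eq_single_of_mem k (Finset.mem_univ k)
    fun j _ hjk => horth k j (Ne.symm hjk) _ hx _ (hf j)

theorem sum_apply_sum_eq_of_orthogonal {S : J → Set V}
    (horth : ∀ j k, j ≠ k → ∀ x ∈ S j, ∀ y ∈ S k, B x y = 0) {f f' : J → V}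
    (hf : ∀ j, f j ∈ S j) (hf' : ∀ j, f' j ∈ S j) :
    B (∑ j, f j) (∑ j, f' j) = ∑ j, B (f j) (f' j) := by
  rw [map_sum]
  exact Finset.sum_congr rfl fun k _ => sum_apply_eq_of_orthogonal horth hf (hf' k)

theorem exists_int_of_mem_iSup (horth : ∀ j k, j ≠ k → ∀ x ∈ Lc j, ∀ y ∈ Lc k, B x y = 0)
    (hint : ∀ j, ∀ v ∈ Lc j, ∀ w ∈ Lc j, ∃ m : ℤ, B v w = m) {v w : V} (hv : v ∈ ⨆ j, Lc j)
    (hw : w ∈ ⨆ j, Lc j) : ∃ m : ℤ, B v w = m := by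
  obtain ⟨f, hf, rfl⟩ := exists_sum_eq_of_mem_iSup hv
  obtain ⟨f', hf', rfl⟩ := exists_sum_eq_of_mem_iSup hw
  choose m hm using fun j => hint j (f j) (hf j) (f' j) (hf' j)
  refine ⟨∑ j, m j, ?_⟩
  rw [sum_apply_sum_eq_of_orthogonal (S := fun j => Lc j) horth hf hf']
  push_cast
  exact Finset.sum_congr rfl fun j _ => hm j

theorem exists_even_of_mem_iSup (horth : ∀ j k, j ≠ k → ∀ x ∈ Lc j, ∀ y ∈ Lc k, B x y = 0)
    (heven : ∀ j, ∀ v ∈ Lc j, ∃ n : ℤ, B v v = 2 * n) {v : V} (hv : v ∈ ⨆ j, Lc j) :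
    ∃ n : ℤ, B v v = 2 * n := by
  obtain ⟨f, hf, rfl⟩ := exists_sum_eq_of_mem_iSup hv
  choose n hn using fun j => heven j (f j) (hf j)
  refine ⟨∑ j, n j, ?_⟩
  rw [sum_apply_sum_eq_of_orthogonal (S := fun j => Lc j) horth hf hf]
  push_cast
  rw [Finset.mul_sum]
  exact Finset.sum_congr rfl fun j _ => hn j

theorem apply_self_neg_of_mem_iSup (horth : ∀ j k, j ≠ k → ∀ x ∈ Lc j, ∀ y ∈ Lc k, B x y = 0)
    (hneg : ∀ j, ∀ v ∈ Lc j, v ≠ 0 → B v v < 0) {v : V} (hv : v ∈ ⨆ j, Lc j) (hv0 : v ≠ 0) :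
    B v v < 0 := by
  obtain ⟨f, hf, rfl⟩ := exists_sum_eq_of_mem_iSup hv
  obtain ⟨k, hk⟩ : ∃ k, f k ≠ 0 := by
    by_contra! h
    exact hv0 (Finset.sum_eq_zero fun j _ => h j)
  rw [sum_apply_sum_eq_of_orthogonal (S := fun j => Lc j) horth hf hf]
  exact Finset.sum_neg' (fun j _ => apply_self_nonpos_of_negDef (hneg j) (hf j))
    ⟨k, Finset.mem_univ k, hneg k _ (hf k) hk⟩

-- The components of `x` outside `Lc j` are orthogonal to themselves.
theorem mem_of_mem_iSup_of_mem_span (horth : ∀ j k, j ≠ k → ∀ x ∈ Lc j, ∀ y ∈ Lc k, B x y = 0)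
    (hneg : ∀ j, ∀ v ∈ Lc j, v ≠ 0 → B v v < 0) {j : J} {x : V} (hx : x ∈ ⨆ k, Lc k)
    (hxj : x ∈ span ℚ (Lc j : Set V)) : x ∈ Lc j := by
  obtain ⟨f, hf, rfl⟩ := exists_sum_eq_of_mem_iSup hx
  have hfk : ∀ k, k ≠ j → f k = 0 := fun k hkj => by
    refine eq_zero_of_apply_self_eq_zero (hneg k) (hf k) ?_
    rw [← sum_apply_eq_of_orthogonal (S := fun j => Lc j) horth hf (hf k)]
    exact orthogonal_span_rat horth j k (Ne.symm hkj) _ hxj _ (subset_span (hf k))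
  rw [Finset.sum_eq_single_of_mem j (Finset.mem_univ j) fun k _ => hfk k]
  exact hf j

end OrthogonalSum

section Kernel

variable {V : Type} [AddCommGroup V] [Module ℚ V] {B : V →ₗ[ℚ] V →ₗ[ℚ] ℚ}

def IsUnimodularLattice (B : V →ₗ[ℚ] V →ₗ[ℚ] ℚ) (L : Submodule ℤ V) : Prop :=
  ∀ x ∈ span ℚ (L : Set V), (∀ v ∈ L, ∃ m : ℤ, B x v = m) → x ∈ L

theorem map_root_eq_or_eq_neg {L : Submodule ℤ V}
    (hint : ∀ v ∈ L, ∀ w ∈ L, ∃ m : ℤ, B v w = m) (heven : ∀ v ∈ L, ∃ n : ℤ, B v v = 2 * n)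
    (hneg : ∀ v ∈ L, v ≠ 0 → B v v < 0) (g : V →ₗ[ℚ] V) (hgB : ∀ x y, B (g x) (g y) = B x y)
    (hker : ∀ x, (∀ v ∈ L, ∃ m : ℤ, 2 * B x v = m) → g x - x ∈ L) {r : V} (hr : r ∈ L)
    (hrr : B r r = -2) : g r = r ∨ g r = -r := by
  have hw := hker ((2 : ℚ)⁻¹ • r) fun v hv => by
    obtain ⟨m, hm⟩ := hint r hr v hv
    exact ⟨m, by rw [map_smul, LinearMap.smul_apply, smul_eq_mul, hm]; ring⟩
  refine eq_or_eq_neg_of_eq_add_two_smul heven hneg hr hrr (by rw [hgB, hrr]) hw ?_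
  rw [map_smul]
  module

variable {J : Type} [Fintype J] {Lc : J → Submodule ℤ V}

theorem isUnimodularLattice_of_eqOn_neg
    (horth : ∀ j k, j ≠ k → ∀ x ∈ Lc j, ∀ y ∈ Lc k, B x y = 0)
    (hneg : ∀ j, ∀ v ∈ Lc j, v ≠ 0 → B v v < 0) (g : V →ₗ[ℚ] V)
    (hker : ∀ x, (∀ v ∈ ⨆ k, Lc k, ∃ m : ℤ, 2 * B x v = m) → g x - x ∈ ⨆ k, Lc k) {j : J}
    (hg : ∀ v ∈ Lc j, g v = -v) : IsUnimodularLattice B (Lc j) := by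
  intro x hx hxint
  have hgx : g x = -x := LinearMap.eqOn_span (f := g) (g := -LinearMap.id) hg hx
  have hmem := hker ((2 : ℚ)⁻¹ • x) fun v hv => by
    obtain ⟨f, hf, rfl⟩ := exists_sum_eq_of_mem_iSup hv
    obtain ⟨m, hm⟩ := hxint (f j) (hf j)
    refine ⟨m, ?_⟩
    rw [map_smul, LinearMap.smul_apply, smul_eq_mul,
      apply_sum_eq_of_orthogonal (S := fun k => span ℚ (Lc k : Set V)) (orthogonal_span_rat horth)
        (fun k => subset_span (hf k)) hx, hm]
    ring
  rw [map_smul, hgx, show (2 : ℚ)⁻¹ • -x - (2 : ℚ)⁻¹ • x = -x by module, neg_mem_iff] at hmem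
  exact mem_of_mem_iSup_of_mem_span horth hneg hmem hx

theorem sub_mem_iSup_of_forall_eqOn (horth : ∀ j k, j ≠ k → ∀ x ∈ Lc j, ∀ y ∈ Lc k, B x y = 0)
    (hspan : span ℚ ((⨆ j, Lc j : Submodule ℤ V) : Set V) = ⊤) (g : V →ₗ[ℚ] V)
    (hg : ∀ j, (∀ v ∈ Lc j, g v = v) ∨ (IsUnimodularLattice B (Lc j) ∧ ∀ v ∈ Lc j, g v = -v))
    {x : V} (hx : ∀ v ∈ ⨆ j, Lc j, ∃ m : ℤ, 2 * B x v = m) : g x - x ∈ ⨆ j, Lc j := by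
  have hxP : x ∈ ⨆ j, span ℚ (Lc j : Set V) := by rw [iSup_span_rat_eq_top hspan]; trivial
  obtain ⟨f, hf, rfl⟩ := exists_sum_eq_of_mem_iSup hxP
  have hcomp : ∀ j, g (f j) - f j ∈ Lc j := by
    intro j
    rcases hg j with hid | ⟨huni, hneg⟩
    · rw [LinearMap.eqOn_span (f := g) (g := LinearMap.id) hid (hf j), LinearMap.id_apply,
        sub_self]
      exact zero_mem _
    · have h2f : (2 : ℚ) • f j ∈ Lc j := huni _ (smul_mem _ _ (hf j)) fun v hv => by
        obtain ⟨m, hm⟩ := hx v (mem_iSup_of_mem j hv)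
        rw [sum_apply_eq_of_orthogonal (S := fun k => span ℚ (Lc k : Set V))
          (orthogonal_span_rat horth) hf (subset_span hv)] at hm
        exact ⟨m, by rw [map_smul, LinearMap.smul_apply, smul_eq_mul, hm]⟩
      rw [LinearMap.eqOn_span (f := g) (g := -LinearMap.id) hneg (hf j),
        show (-LinearMap.id : V →ₗ[ℚ] V) (f j) - f j = -((2 : ℚ) • f j) by simp; module]
      exact neg_mem h2f
  rw [map_sum, ← Finset.sum_sub_distrib]
  exact sum_mem fun j _ => mem_iSup_of_mem j (hcomp j)

end Kernel

theorem statement12_general {V : Type} [AddCommGroup V] [Module ℚ V]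
    (B : V →ₗ[ℚ] V →ₗ[ℚ] ℚ)
    (J : Type) [Fintype J] (Lc : J → Submodule ℤ V)
    (hcADE : ∀ j, IsADELattice B (Lc j) ∧ IsIrreducibleLattice B (Lc j))
    (horth : ∀ j k, j ≠ k → ∀ x ∈ Lc j, ∀ y ∈ Lc k, B x y = 0)
    (L : Submodule ℤ V) (hsum : (⨆ j, Lc j) = L)
    (hspan : Submodule.span ℚ (L : Set V) = ⊤)
    (g : V ≃ₗ[ℚ] V)
    (hgB : ∀ x y : V, B (g x) (g y) = B x y) :
    ((∀ x : V, (∀ v ∈ L, ∃ m : ℤ, 2 * B x v = m) → g x - x ∈ L) ↔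
      (∀ j, (∀ v ∈ Lc j, g v = v) ∨
        ((∀ x ∈ Submodule.span ℚ ((Lc j : Set V)),
            (∀ v ∈ Lc j, ∃ m : ℤ, B x v = m) → x ∈ Lc j) ∧
          ∀ v ∈ Lc j, g v = -v))) := by
  subst hsum
  have hneg j := (hcADE j).1.2.2.1
  constructor
  · intro hker j
    have hroots : ∀ r, IsRootOf B (Lc j) r → g r = r ∨ g r = -r := fun r hr =>
      map_root_eq_or_eq_neg
        (fun _ hv _ hw => exists_int_of_mem_iSup horth (fun j => (hcADE j).1.1) hv hw)
        (fun _ hv => exists_even_of_mem_iSup horth (fun j => (hcADE j).1.2.1) hv)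
        (fun _ hv => apply_self_neg_of_mem_iSup horth hneg hv) g hgB hker
        (mem_iSup_of_mem j hr.1) hr.2
    exact (eqOn_or_eqOn_neg_of_irreducible (hcADE j).2 (hcADE j).1.2.2.2 g hgB hroots).imp id
      fun hg => ⟨isUnimodularLattice_of_eqOn_neg horth hneg g hker hg, hg⟩
  · exact fun hg x => sub_mem_iSup_of_forall_eqOn horth hspan g hg

/-- let `R̃ = ⊕_j R̃_j` be an ADE root lattice with irreducible components
`R̃_j` (here `L = ⨆ j, Lc j` spanning `V`).  An isometry `g` of `R̃` lies in the kernel of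
`ψ : O(R̃) → O((1/2)R̃^∨/R̃)` (the discriminant of `R̃(2)`: `g x - x ∈ L` whenever
`2⟨x, v⟩ ∈ ℤ` for all `v ∈ L`) if and only if on each component `R̃_j` it is the identity,
or minus the identity with `R̃_j` unimodular. -/
theorem statement12 {V : Type} [AddCommGroup V] [Module ℚ V] [FiniteDimensional ℚ V]
    (B : V →ₗ[ℚ] V →ₗ[ℚ] ℚ) (hsymm : ∀ x y : V, B x y = B y x)
    (J : Type) [Fintype J] (Lc : J → Submodule ℤ V)
    (hcADE : ∀ j, IsADELattice B (Lc j) ∧ IsIrreducibleLattice B (Lc j))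
    (horth : ∀ j k, j ≠ k → ∀ x ∈ Lc j, ∀ y ∈ Lc k, B x y = 0)
    (L : Submodule ℤ V) (hsum : (⨆ j, Lc j) = L)
    (hspan : Submodule.span ℚ (L : Set V) = ⊤)
    (g : V ≃ₗ[ℚ] V)
    (hgB : ∀ x y : V, B (g x) (g y) = B x y)
    (hgL : ∀ x : V, x ∈ L ↔ g x ∈ L) :
    ((∀ x : V, (∀ v ∈ L, ∃ m : ℤ, 2 * B x v = m) → g x - x ∈ L) ↔
      (∀ j, (∀ v ∈ Lc j, g v = v) ∨
        ((∀ x ∈ Submodule.span ℚ ((Lc j : Set V)),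
            (∀ v ∈ Lc j, ∃ m : ℤ, B x v = m) → x ∈ Lc j) ∧
          ∀ v ∈ Lc j, g v = -v))) :=
  statement12_general B J Lc hcADE horth L hsum hspan g hgB
end

section
/- Let R ⊆ L₁₀ be an ADE-sublattice of the even unimodular hyperbolic lattice L₁₀ of rank 10, with inclusion ι_R. Let M_R be the ℤ-submodule of (L₁₀(2) ⊕ R(2)) ⊗ ℚ generated by L₁₀(2) and the vectors (ι_R(v), v)/2 for v ∈ R, with the extended bilinear form. Then M_R is an even lattice; in particular, for v ∈ R with ⟨v,v⟩ = -2 the vector (ι_R(v), v)/2 has square -2 in M_R. -/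
/-! On the generators of `M_R` the doubled form is integral, `(x, 0)·(y, 0) = 2⟨x, y⟩`,
`(x, 0)·(v, v)/2 = ⟨x, v⟩` and `(v, v)/2·(u, u)/2 = ⟨v, u⟩` with `R ⊆ L₁₀`, and it is even there
because `L₁₀` is. Integrality of a bilinear form passes to the `ℤ`-span of a set, and then so does
evenness of a symmetric form, since `q(z + w) = q(z) + q(w) + 2b(z, w)` and `q(c z) = c² q(z)`. -/

open Submodule

namespace LinearMap

variable {W : Type*} [AddCommGroup W] [Module ℚ W] (D : W →ₗ[ℚ] W →ₗ[ℚ] ℚ) {S : Set W}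

theorem exists_int_eq_of_mem_span (hS : ∀ z ∈ S, ∀ w ∈ S, ∃ m : ℤ, D z w = m) {z w : W}
    (hz : z ∈ span ℤ S) (hw : w ∈ span ℤ S) : ∃ m : ℤ, D z w = m := by
  have hle : map₂ (D.restrictScalars₁₂ ℤ ℤ) (span ℤ S) (span ℤ S) ≤ 1 := by
    rw [map₂_span_span, span_le]
    rintro _ ⟨z, hz, w, hw, rfl⟩
    obtain ⟨m, hm⟩ := hS z hz w hw
    exact mem_one.2 ⟨m, by simp [hm]⟩
  obtain ⟨m, hm⟩ := mem_one.1 (map₂_le.1 hle z hz w hw)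
  exact ⟨m, by simpa using hm.symm⟩

theorem exists_two_mul_eq_of_mem_span (hD : D.IsSymm)
    (hS : ∀ z ∈ S, ∀ w ∈ S, ∃ m : ℤ, D z w = m) (hSeven : ∀ z ∈ S, ∃ n : ℤ, D z z = 2 * n)
    {z : W} (hz : z ∈ span ℤ S) : ∃ n : ℤ, D z z = 2 * n := by
  induction hz using span_induction with
  | mem z hz => exact hSeven z hz
  | zero => exact ⟨0, by simp⟩
  | add z w hz hw ihz ihw =>
    obtain ⟨n₁, hn₁⟩ := ihz
    obtain ⟨n₂, hn₂⟩ := ihw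
    obtain ⟨m, hm⟩ := D.exists_int_eq_of_mem_span hS hz hw
    refine ⟨n₁ + n₂ + m, ?_⟩
    have hwz : D w z = m := by rw [← hD.eq z w, hm]; rfl
    simp only [map_add, add_apply, hn₁, hn₂, hm, hwz]
    push_cast
    ring
  | smul c z _ ih =>
    obtain ⟨n, hn⟩ := ih
    refine ⟨c ^ 2 * n, ?_⟩
    simp only [map_zsmul, smul_apply, zsmul_eq_mul, hn]
    push_cast
    ring

end LinearMap

section DoubledSum

variable {K : Type*} [CommSemiring K] {V : Type*} [AddCommMonoid V] [Module K V]

def doubledSumForm (B : V →ₗ[K] V →ₗ[K] K) : V × V →ₗ[K] V × V →ₗ[K] K :=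
  (2 : K) • (B.compl₁₂ (LinearMap.fst K V V) (LinearMap.fst K V V) +
    B.compl₁₂ (LinearMap.snd K V V) (LinearMap.snd K V V))

@[simp]
theorem doubledSumForm_apply (B : V →ₗ[K] V →ₗ[K] K) (z w : V × V) :
    doubledSumForm B z w = 2 * B z.1 w.1 + 2 * B z.2 w.2 := by
  simp [doubledSumForm]

theorem isSymm_doubledSumForm {B : V →ₗ[K] V →ₗ[K] K} (hB : ∀ x y, B x y = B y x) :
    (doubledSumForm B).IsSymm :=
  ⟨fun z w => by simp [hB z.1, hB z.2]⟩

end DoubledSum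

section Generators

variable {V : Type*} [AddCommGroup V] [Module ℚ V]

/-- The generators of `M_R`: `L₁₀` in the first factor and the vectors `(ι_R v, v)/2`. -/
def latticeAndHalfDiagonal (L R : Submodule ℤ V) : Set (V × V) :=
  (fun x : V => (x, (0 : V))) '' L ∪ (fun v : V => ((2⁻¹ : ℚ) • v, (2⁻¹ : ℚ) • v)) '' R

variable {B : V →ₗ[ℚ] V →ₗ[ℚ] ℚ} {L R : Submodule ℤ V}

theorem exists_int_doubledSumForm_eq (hint : ∀ v ∈ L, ∀ w ∈ L, ∃ m : ℤ, B v w = m) (hRL : R ≤ L) :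
    ∀ z ∈ latticeAndHalfDiagonal L R, ∀ w ∈ latticeAndHalfDiagonal L R,
      ∃ m : ℤ, doubledSumForm B z w = m := by
  rintro _ (⟨x, hx, rfl⟩ | ⟨v, hv, rfl⟩) _ (⟨y, hy, rfl⟩ | ⟨u, hu, rfl⟩)
  · obtain ⟨m, hm⟩ := hint x hx y hy
    exact ⟨2 * m, by simp [hm]⟩
  · obtain ⟨m, hm⟩ := hint x hx u (hRL hu)
    exact ⟨m, by simp [hm]⟩
  · obtain ⟨m, hm⟩ := hint v (hRL hv) y hy
    exact ⟨m, by simp [hm]⟩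
  · obtain ⟨m, hm⟩ := hint v (hRL hv) u (hRL hu)
    exact ⟨m, by
      simp only [doubledSumForm_apply, map_smul, LinearMap.smul_apply, smul_eq_mul, hm]
      ring⟩

theorem exists_doubledSumForm_self_eq_two_mul (heven : ∀ v ∈ L, ∃ n : ℤ, B v v = 2 * n)
    (hRL : R ≤ L) :
    ∀ z ∈ latticeAndHalfDiagonal L R, ∃ n : ℤ, doubledSumForm B z z = 2 * n := by
  rintro _ (⟨x, hx, rfl⟩ | ⟨v, hv, rfl⟩)
  · obtain ⟨n, hn⟩ := heven x hx
    exact ⟨2 * n, by simp [hn]⟩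
  · obtain ⟨n, hn⟩ := heven v (hRL hv)
    exact ⟨n, by
      simp only [doubledSumForm_apply, map_smul, LinearMap.smul_apply, smul_eq_mul, hn]
      ring⟩

end Generators

theorem statement14_general {V : Type} [AddCommGroup V] [Module ℚ V]
    (B : V →ₗ[ℚ] V →ₗ[ℚ] ℚ) (hsymm : ∀ x y : V, B x y = B y x)
    (L : Submodule ℤ V)
    (hint : ∀ v ∈ L, ∀ w ∈ L, ∃ m : ℤ, B v w = m)
    (heven : ∀ v ∈ L, ∃ n : ℤ, B v v = 2 * n)
    (R : Submodule ℤ V) (hRL : R ≤ L) :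
    (∀ z ∈ Submodule.span ℤ
        ((fun x : V => (x, (0 : V))) '' L ∪
          (fun v : V => ((2⁻¹ : ℚ) • v, (2⁻¹ : ℚ) • v)) '' R),
      ∃ n : ℤ, 2 * B z.1 z.1 + 2 * B z.2 z.2 = 2 * n) ∧
    (∀ v ∈ R, B v v = -2 →
      2 * B ((2⁻¹ : ℚ) • v) ((2⁻¹ : ℚ) • v) + 2 * B ((2⁻¹ : ℚ) • v) ((2⁻¹ : ℚ) • v) = -2) := by
  refine ⟨fun z hz => ?_, fun v _ hvv => ?_⟩
  · simpa using (doubledSumForm B).exists_two_mul_eq_of_mem_span (isSymm_doubledSumForm hsymm)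
      (exists_int_doubledSumForm_eq hint hRL) (exists_doubledSumForm_self_eq_two_mul heven hRL) hz
  · simp only [map_smul, LinearMap.smul_apply, smul_eq_mul, hvv]
    norm_num

/-- let `L₁₀` (here `L`, an even unimodular hyperbolic lattice of rank 10,
spanning `V`) contain an ADE-sublattice `R`.  Let `M_R ⊆ (L₁₀(2) ⊕ R(2)) ⊗ ℚ` (here inside
`V × V` with the doubled form `⟨(x₁,x₂),(y₁,y₂)⟩ = 2⟨x₁,y₁⟩ + 2⟨x₂,y₂⟩`) be generated by
`L₁₀(2)` and the vectors `(ι_R v, v)/2`, `v ∈ R`.  Then `M_R` is an even lattice; in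
particular for `v ∈ R` with `⟨v,v⟩ = -2` the vector `(ι_R v, v)/2` has square `-2`. -/
theorem statement14 {V : Type} [AddCommGroup V] [Module ℚ V] [FiniteDimensional ℚ V]
    (B : V →ₗ[ℚ] V →ₗ[ℚ] ℚ) (hsymm : ∀ x y : V, B x y = B y x)
    (L : Submodule ℤ V)
    (hint : ∀ v ∈ L, ∀ w ∈ L, ∃ m : ℤ, B v w = m)
    (heven : ∀ v ∈ L, ∃ n : ℤ, B v v = 2 * n)
    (hspan : Submodule.span ℚ (L : Set V) = ⊤)
    (hrank : Module.finrank ℚ V = 10)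
    (hunimod : ∀ x : V, (∀ v ∈ L, ∃ m : ℤ, B x v = m) → x ∈ L)
    (hhyperbolic : ∃ x : V, 0 < B x x ∧ ∀ y : V, B x y = 0 → y ≠ 0 → B y y < 0)
    (R : Submodule ℤ V) (hRL : R ≤ L)
    (hRroots : Submodule.span ℤ {r : V | r ∈ R ∧ B r r = -2} = R)
    (hRneg : ∀ v ∈ R, v ≠ 0 → B v v < 0) :
    (∀ z ∈ Submodule.span ℤ
        ((fun x : V => (x, (0 : V))) '' L ∪
          (fun v : V => ((2⁻¹ : ℚ) • v, (2⁻¹ : ℚ) • v)) '' R),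
      ∃ n : ℤ, 2 * B z.1 z.1 + 2 * B z.2 z.2 = 2 * n) ∧
    (∀ v ∈ R, B v v = -2 →
      2 * B ((2⁻¹ : ℚ) • v) ((2⁻¹ : ℚ) • v) + 2 * B ((2⁻¹ : ℚ) • v) ((2⁻¹ : ℚ) • v) = -2) :=
  statement14_general B hsymm L hint heven R hRL
end

section
/- Let X be a complex K3 surface with a fixed-point-free involution ε and quotient Enriques surface Y = X/ε, with quotient map π : X → Y. Let S_{X+} and S_{X-} be the (+1)- and (-1)-eigenlattices of ε acting on the Néron–Severi lattice S_X. If a root r̃ of S_X is written r̃ = v_L + v_R with v_L ∈ S_{X+} ⊗ ℚ, v_R ∈ S_{X-} ⊗ ℚ, and the hyperplane r̃^⊥ meets the positive cone of S_{X+} (i.e. ⟨v_L, v_L⟩ < 0), and r̃ ∉ S_{X+}, then ⟨v_L, v_L⟩ = -1 and ⟨r̃, r̃^ε⟩ = 0. -/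
/-!
Write `k = ⟨r̃, r̃^ε⟩ ∈ ℤ`. Then `r̃ + r̃^ε ∈ S₊` has square `2k - 4`, which is divisible by `4`,
so `k` is even; `r̃ - r̃^ε ∈ S₋` is nonzero with square `-2k - 4 < 0`, so `k > -2`; and
`⟨v_L, v_L⟩ = (2k - 4)/4 < 0` gives `k < 2`. Hence `k = 0` and `⟨v_L, v_L⟩ = -1`.
-/

section SymmetricForm

variable {R M : Type*} [CommRing R] [AddCommGroup M] [Module R M] {B : M →ₗ[R] M →ₗ[R] R}

theorem apply_add_add_of_symm (hsymm : ∀ x y : M, B x y = B y x) (x y : M) :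
    B (x + y) (x + y) = B x x + 2 * B x y + B y y := by
  simp only [map_add, LinearMap.add_apply, hsymm y x]
  ring

theorem apply_sub_sub_of_symm (hsymm : ∀ x y : M, B x y = B y x) (x y : M) :
    B (x - y) (x - y) = B x x - 2 * B x y + B y y := by
  simp only [map_sub, LinearMap.sub_apply, hsymm y x]
  ring

theorem apply_smul_smul_self (c : R) (x : M) : B (c • x) (c • x) = c ^ 2 * B x x := by
  simp only [map_smul, LinearMap.smul_apply, smul_eq_mul]
  ring

end SymmetricForm

theorem statement18_general {V : Type} [AddCommGroup V] [Module ℚ V]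
    (B : V →ₗ[ℚ] V →ₗ[ℚ] ℚ) (hsymm : ∀ x y : V, B x y = B y x)
    (S : Submodule ℤ V)
    (hint : ∀ v ∈ S, ∀ w ∈ S, ∃ m : ℤ, B v w = m)
    (ε : V ≃ₗ[ℚ] V) (hinv : ∀ x : V, ε (ε x) = x)
    (hiso : ∀ x y : V, B (ε x) (ε y) = B x y)
    (hS : ∀ x : V, x ∈ S ↔ ε x ∈ S)
    -- `S₊ ≅ S_Y(2)` is an even lattice with form multiplied by 2
    (hplus : ∀ v ∈ S, ε v = v → ∃ n : ℤ, B v v = 4 * n)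
    -- `S₋` is negative definite (π is étale, `S₋` contains no roots a fortiori)
    (hminus : ∀ v ∈ S, ε v = -v → v ≠ 0 → B v v < 0)
    (r : V) (hr : r ∈ S) (hrr : B r r = -2)
    (hnotplus : ε r ≠ r)
    (hvL : B ((2⁻¹ : ℚ) • (r + ε r)) ((2⁻¹ : ℚ) • (r + ε r)) < 0) :
    B ((2⁻¹ : ℚ) • (r + ε r)) ((2⁻¹ : ℚ) • (r + ε r)) = -1 ∧ B r (ε r) = 0 := by
  have hεr : ε r ∈ S := (hS r).mp hr
  obtain ⟨k, hk⟩ := hint r hr (ε r) hεr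
  have hεrr : B (ε r) (ε r) = -2 := (hiso r r).trans hrr
  have hsum : B (r + ε r) (r + ε r) = 2 * k - 4 := by
    rw [apply_add_add_of_symm hsymm, hrr, hεrr, hk]; ring
  have hdiff : B (r - ε r) (r - ε r) = -2 * k - 4 := by
    rw [apply_sub_sub_of_symm hsymm, hrr, hεrr, hk]; ring
  obtain ⟨n, hn⟩ := hplus _ (S.add_mem hr hεr) (by rw [map_add, hinv, add_comm])
  have hneg := hminus _ (S.sub_mem hr hεr) (by rw [map_sub, hinv, neg_sub])
    (sub_ne_zero.mpr hnotplus.symm)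
  rw [apply_smul_smul_self, hsum] at hvL ⊢
  rw [hdiff] at hneg
  rw [hsum] at hn
  have hk0 : k = 0 := by
    have hlt : k < 2 := by exact_mod_cast (by linarith : (k : ℚ) < 2)
    have hgt : -2 < k := by exact_mod_cast (by linarith : (-2 : ℚ) < k)
    have hdvd : 2 * k - 4 = 4 * n := by exact_mod_cast hn
    omega
  rw [hk, hk0]
  norm_num

/-- lattice-theoretic formulation.  Let `S = S_X` be the Néron–Severi
lattice of the K3 cover of an Enriques surface, an even lattice with an involutive
isometry `ε` such that the invariant part `S₊ = π^*(S_Y(2))` has all squares divisible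
by 4 and the anti-invariant part `S₋` is negative definite.  If `r̃ ∈ S` is a root
(`⟨r̃,r̃⟩ = -2`) with `r̃ ∉ S₊`, written `r̃ = v_L + v_R` with `v_L = (r̃ + r̃^ε)/2`,
`v_R = (r̃ - r̃^ε)/2`, and `⟨v_L, v_L⟩ < 0` (the hyperplane `r̃^⊥` meets the positive
cone of `S₊`), then `⟨v_L, v_L⟩ = -1` and `⟨r̃, r̃^ε⟩ = 0`. -/
theorem statement18 {V : Type} [AddCommGroup V] [Module ℚ V]
    (B : V →ₗ[ℚ] V →ₗ[ℚ] ℚ) (hsymm : ∀ x y : V, B x y = B y x)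
    (S : Submodule ℤ V)
    (hint : ∀ v ∈ S, ∀ w ∈ S, ∃ m : ℤ, B v w = m)
    (heven : ∀ v ∈ S, ∃ n : ℤ, B v v = 2 * n)
    (ε : V ≃ₗ[ℚ] V) (hinv : ∀ x : V, ε (ε x) = x)
    (hiso : ∀ x y : V, B (ε x) (ε y) = B x y)
    (hS : ∀ x : V, x ∈ S ↔ ε x ∈ S)
    -- `S₊ ≅ S_Y(2)` is an even lattice with form multiplied by 2
    (hplus : ∀ v ∈ S, ε v = v → ∃ n : ℤ, B v v = 4 * n)
    -- `S₋` is negative definite (π is étale, `S₋` contains no roots a fortiori)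
    (hminus : ∀ v ∈ S, ε v = -v → v ≠ 0 → B v v < 0)
    (r : V) (hr : r ∈ S) (hrr : B r r = -2)
    (hnotplus : ε r ≠ r)
    (hvL : B ((2⁻¹ : ℚ) • (r + ε r)) ((2⁻¹ : ℚ) • (r + ε r)) < 0) :
    B ((2⁻¹ : ℚ) • (r + ε r)) ((2⁻¹ : ℚ) • (r + ε r)) = -1 ∧ B r (ε r) = 0 :=
  statement18_general B hsymm S hint ε hinv hiso hS hplus hminus r hr hrr hnotplus hvL
end

section
/- Let G be a group acting on a connected simple graph (V, E), and let V₀ ⊆ V be a finite nonempty set of pairwise G-inequivalent vertices such that every vertex adjacent to a vertex of V₀ is G-equivalent to some vertex of V₀. Then the natural map V₀ → V/G is a bijection. Moreover, if for each vertex v adjacent to some vertex of V₀ one chooses h(v) ∈ G with v^{h(v)} ∈ V₀, and H is the set of all such h(v), then for a fixed v₀ ∈ V₀ we have G = ⟨ H ∪ Stab_G(v₀) ⟩. -/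
/-- let a group `G` act on a connected simple graph `(V, E)` and let
`V₀` be a finite nonempty set of pairwise `G`-inequivalent vertices such that every vertex
adjacent to a vertex of `V₀` is `G`-equivalent to some vertex of `V₀`.  Then `V₀ → V/G` is
a bijection, and if `h(v) ∈ G` moves each vertex `v` adjacent to `V₀` into `V₀`, then `G`
is generated by the set `H` of these `h(v)` together with the stabilizer of a fixed
`v₀ ∈ V₀`. -/
theorem statement19 {V : Type} (Gr : SimpleGraph V) (hconn : Gr.Connected)
    {G : Type} [Group G] [MulAction G V]
    (hact : ∀ (g : G) (u v : V), Gr.Adj u v → Gr.Adj (g • u) (g • v))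
    (V₀ : Finset V) (hne : V₀.Nonempty)
    (hpair : ∀ u ∈ V₀, ∀ v ∈ V₀, (∃ g : G, g • u = v) → u = v)
    (hadj : ∀ v : V, (∃ u ∈ V₀, Gr.Adj u v) → ∃ u ∈ V₀, ∃ g : G, g • v = u)
    (h : V → G)
    (hh : ∀ v : V, (∃ u ∈ V₀, Gr.Adj u v) → h v • v ∈ V₀)
    (v₀ : V) (hv₀ : v₀ ∈ V₀) :
    Function.Bijective
      (fun u : V₀ => Quotient.mk (MulAction.orbitRel G V) (u : V)) ∧
    Subgroup.closure
      ({g : G | ∃ v : V, (∃ u ∈ V₀, Gr.Adj u v) ∧ g = h v} ∪ {g : G | g • v₀ = v₀}) = ⊤ := by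
  set S : Set G := {g : G | ∃ v : V, (∃ u ∈ V₀, Gr.Adj u v) ∧ g = h v} with hS
  -- key: every vertex can be moved into V₀ by an element of ⟨S⟩
  have key : ∀ v : V, ∃ k : G, k ∈ Subgroup.closure S ∧ k • v ∈ V₀ := by
    have step : ∀ u v : V, Gr.Adj u v →
        (∃ k : G, k ∈ Subgroup.closure S ∧ k • u ∈ V₀) →
        (∃ k : G, k ∈ Subgroup.closure S ∧ k • v ∈ V₀) := by
      rintro u v huv ⟨k, hk, hku⟩
      have hadjw : ∃ u' ∈ V₀, Gr.Adj u' (k • v) := ⟨k • u, hku, hact k u v huv⟩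
      refine ⟨h (k • v) * k, Subgroup.mul_mem _ ?_ hk, ?_⟩
      · exact Subgroup.subset_closure ⟨k • v, hadjw, rfl⟩
      · rw [mul_smul]; exact hh (k • v) hadjw
    have main : ∀ u v : V, Gr.Walk u v →
        (∃ k : G, k ∈ Subgroup.closure S ∧ k • u ∈ V₀) →
        (∃ k : G, k ∈ Subgroup.closure S ∧ k • v ∈ V₀) := by
      intro u v p
      induction p with
      | nil => exact id
      | cons hadj' p ih => exact fun hu => ih (step _ _ hadj' hu)
    intro v
    obtain ⟨p⟩ := hconn v₀ v
    exact main v₀ v p ⟨1, Subgroup.one_mem _, by simpa using hv₀⟩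
  constructor
  · constructor
    · rintro ⟨u, hu⟩ ⟨v, hv⟩ huv
      have := Quotient.exact huv
      have hrel : ∃ g : G, g • v = u := this
      exact Subtype.ext (hpair v hv u hu hrel).symm
    · intro q
      induction q using Quotient.inductionOn with
      | h v =>
        obtain ⟨k, hk, hkv⟩ := key v
        refine ⟨⟨k • v, hkv⟩, ?_⟩
        exact Quotient.sound ⟨k, rfl⟩
  · rw [eq_top_iff]
    intro g _
    obtain ⟨k, hk, hkv⟩ := key (g • v₀)
    have hstab : (k * g) • v₀ = v₀ := by
      have := hpair ((k * g) • v₀) (by rwa [mul_smul]) v₀ hv₀ ⟨(k * g)⁻¹, by rw [← mul_smul]; group; simp⟩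
      -- this : (k*g) • v₀ = v₀
      exact this
    have hmem : k * g ∈ Subgroup.closure (S ∪ {g : G | g • v₀ = v₀}) :=
      Subgroup.subset_closure (Or.inr hstab)
    have hkmem : k ∈ Subgroup.closure (S ∪ {g : G | g • v₀ = v₀}) :=
      Subgroup.closure_mono Set.subset_union_left hk
    have : k⁻¹ * (k * g) ∈ Subgroup.closure (S ∪ {g : G | g • v₀ = v₀}) :=
      Subgroup.mul_mem _ (Subgroup.inv_mem _ hkmem) hmem
    simpa using this
end
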